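/- arXiv:1705.06314 — 8 statements merged into one kernel-verified Lean document; each statement's English description precedes it below -/
import Mathlib

section
/- Let Γ : ℝ → ℝⁿ be a smooth curve, ℓ > 0, r : ℝ → ℝⁿ a curve with values in the unit sphere, and γ(t) = Γ(t) + ℓ·r(t). Then the vector γ(t) − Γ(t) is tangent to γ at γ(t) for all t if and only if r satisfies the bicycle equation ℓ·ṙ = −v + (v·r)r, where v = Γ̇. -/
/-!
Since `‖r‖ = 1`, the derivative `ṙ` is orthogonal to `r`. Hence `γ̇ = v + ℓ ṙ` is parallel to
`γ - Γ = ℓ r` exactly when `ℓ ṙ` cancels the component `v - ⟪v, r⟫ r` of `v` orthogonal to `r`.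
-/

open RealInnerProductSpace

section

variable {E : Type*} [NormedAddCommGroup E] [InnerProductSpace ℝ E]

theorem inner_deriv_eq_zero_of_norm_eq_const {r : ℝ → E} {t ρ : ℝ}
    (hr : DifferentiableAt ℝ r t) (hρ : ∀ s, ‖r s‖ = ρ) : ⟪r t, deriv r t⟫ = 0 := by
  have hsq : HasDerivAt (‖r ·‖ ^ 2) (2 * ⟪r t, deriv r t⟫) t := hr.hasDerivAt.norm_sq
  have hconst : (‖r ·‖ ^ 2) = fun _ => ρ ^ 2 := funext fun s => by rw [hρ]
  rw [hconst] at hsq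
  linarith [hsq.unique (hasDerivAt_const t (ρ ^ 2))]

theorem exists_eq_smul_smul_iff {ℓ : ℝ} (hℓ : ℓ ≠ 0) (y u : E) :
    (∃ c : ℝ, y = c • ℓ • u) ↔ ∃ c : ℝ, y = c • u :=
  ⟨fun ⟨c, hc⟩ => ⟨c * ℓ, by rw [hc, smul_smul]⟩,
    fun ⟨c, hc⟩ => ⟨c / ℓ, by rw [hc, smul_smul, div_mul_cancel₀ c hℓ]⟩⟩

theorem exists_add_eq_smul_iff_of_inner_eq_zero {u x : E} (hu : ‖u‖ = 1) (hx : ⟪u, x⟫ = 0)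
    (v : E) : (∃ c : ℝ, v + x = c • u) ↔ x = -v + ⟪v, u⟫ • u := by
  constructor
  · rintro ⟨c, hc⟩
    have hcoeff : ⟪v, u⟫ = c := by
      have := congrArg (⟪·, u⟫) hc
      simpa only [inner_add_left, real_inner_comm u x, hx, add_zero, inner_smul_left,
        real_inner_self_eq_norm_sq, hu, conj_trivial, one_pow, mul_one] using this
    rw [hcoeff, ← hc]
    abel
  · intro h
    exact ⟨⟪v, u⟫, by rw [h]; abel⟩

end

/-- The "no-skid" condition (the segment γ−Γ is tangent to the rear track γ)
is equivalent to the bicycle equation ℓ·ṙ = −v + (v·r)r. -/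
theorem bicycle_equation_iff_tangent
    {n : ℕ} (Γ r : ℝ → EuclideanSpace ℝ (Fin n)) (ℓ : ℝ) (hℓ : 0 < ℓ)
    (hΓ : ContDiff ℝ 1 Γ) (hr : Differentiable ℝ r)
    (hunit : ∀ t, ‖r t‖ = 1)
    (γ : ℝ → EuclideanSpace ℝ (Fin n)) (hγ : γ = fun t => Γ t + ℓ • r t) :
    (∀ t, ∃ c : ℝ, deriv γ t = c • (γ t - Γ t)) ↔
      (∀ t, ℓ • deriv r t = -deriv Γ t + ⟪deriv Γ t, r t⟫ • r t) := by
  subst hγ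
  have hderiv : ∀ t, deriv (fun t => Γ t + ℓ • r t) t = deriv Γ t + ℓ • deriv r t := fun t =>
    ((hΓ.differentiable one_ne_zero t).hasDerivAt.add
      ((hr t).hasDerivAt.const_smul ℓ)).deriv
  have horth : ∀ t, ⟪r t, ℓ • deriv r t⟫ = 0 := fun t => by
    rw [inner_smul_right, inner_deriv_eq_zero_of_norm_eq_const (hr t) hunit, mul_zero]
  refine forall_congr' fun t => ?_
  rw [hderiv, add_sub_cancel_left, exists_eq_smul_smul_iff hℓ.ne',
    exists_add_eq_smul_iff_of_inner_eq_zero (hunit t) (horth t)]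
end

section
/- The bicycle equation ℓ·ṙ = −v + (v·r)r preserves the unit sphere: if ‖r(t₀)‖ = 1 then ‖r(t)‖ = 1 for all t where the solution is defined. -/
open RealInnerProductSpace

/-!
Pairing the equation with `r` gives `ℓ ⟪ṙ, r⟫ = ⟪v, r⟫ (‖r‖² - 1)`, so `ψ = ‖r‖² - 1` solves the
scalar linear equation `ψ' = (2/ℓ) ⟪v, r⟫ ψ`. Its continuous coefficient has a primitive `G`, and
`ψ · exp (-G)` has derivative zero; hence `ψ` vanishes everywhere once it vanishes at `t₀`.
-/

theorem eq_mul_exp_integral_of_hasDerivAt_eq_mul {ψ g : ℝ → ℝ} (hg : Continuous g)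
    (hψ : ∀ t, HasDerivAt ψ (g t * ψ t) t) (t₀ t : ℝ) :
    ψ t = ψ t₀ * Real.exp (∫ s in t₀..t, g s) := by
  set G : ℝ → ℝ := fun t => ∫ s in t₀..t, g s
  have hG : ∀ t, HasDerivAt G (g t) t := fun t =>
    (hg.integral_hasStrictDerivAt t₀ t).hasDerivAt
  have hF : ∀ t, HasDerivAt (fun t => ψ t * Real.exp (-G t)) 0 t := fun t =>
    ((hψ t).mul (hG t).neg.exp).congr_deriv (by ring)
  have hconst : ψ t * Real.exp (-G t) = ψ t₀ * Real.exp (-G t₀) :=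
    is_const_of_deriv_eq_zero (fun t => (hF t).differentiableAt) (fun t => (hF t).deriv) t t₀
  have hG₀ : G t₀ = 0 := intervalIntegral.integral_same
  rw [hG₀, neg_zero, Real.exp_zero, mul_one] at hconst
  rw [← hconst, mul_assoc, ← Real.exp_add, neg_add_cancel, Real.exp_zero, mul_one]

section Bicycle

variable {E : Type*} [NormedAddCommGroup E] [InnerProductSpace ℝ E]

theorem mul_inner_self_of_bicycle {ℓ : ℝ} {x x' w : E} (h : ℓ • x' = -w + ⟪w, x⟫ • x) :
    ℓ * ⟪x', x⟫ = ⟪w, x⟫ * (‖x‖ ^ 2 - 1) := by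
  have h' := congrArg (fun y => ⟪y, x⟫) h
  simp only [inner_add_left, inner_neg_left, real_inner_smul_left,
    real_inner_self_eq_norm_sq] at h'
  linear_combination h'

theorem hasDerivAt_norm_sq_sub_one_of_bicycle {v r : ℝ → E} {ℓ : ℝ} (hℓ : ℓ ≠ 0)
    (hr : Differentiable ℝ r) (hode : ∀ t, ℓ • deriv r t = -v t + ⟪v t, r t⟫ • r t) (t : ℝ) :
    HasDerivAt (fun t => ‖r t‖ ^ 2 - 1) (2 / ℓ * ⟪v t, r t⟫ * (‖r t‖ ^ 2 - 1)) t := by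
  refine ((hr t).hasDerivAt.norm_sq.sub_const 1).congr_deriv ?_
  rw [real_inner_comm]
  field_simp
  linear_combination mul_inner_self_of_bicycle (hode t)

end Bicycle

/-- The bicycle equation preserves the unit sphere. -/
theorem bicycle_equation_preserves_unit_sphere
    {n : ℕ} (v r : ℝ → EuclideanSpace ℝ (Fin n)) (ℓ : ℝ) (hℓ : ℓ ≠ 0)
    (hv : Continuous v) (hr : Differentiable ℝ r)
    (hode : ∀ t, ℓ • deriv r t = -v t + ⟪v t, r t⟫ • r t)
    (t₀ : ℝ) (h0 : ‖r t₀‖ = 1) :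
    ∀ t, ‖r t‖ = 1 := by
  intro t
  have hg : Continuous fun t => 2 / ℓ * ⟪v t, r t⟫ :=
    continuous_const.mul (hv.inner hr.continuous)
  have hsq : ‖r t‖ ^ 2 - 1 = 0 := by
    rw [eq_mul_exp_integral_of_hasDerivAt_eq_mul hg
      (hasDerivAt_norm_sq_sub_one_of_bicycle hℓ hr hode) t₀ t, h0]
    ring
  exact (pow_eq_one_iff_of_nonneg (norm_nonneg _) two_ne_zero).mp (sub_eq_zero.mp hsq)
end

section
/- In dimension 2, the flow of the bicycle equation ℓ·θ̇ = v₁ sin θ − v₂ cos θ is the projection, via the double cover (x,y) ↦ ((x²−y²)/(x²+y²), 2xy/(x²+y²)), of the flow of the linear system (ẋ,ẏ) = −(1/2ℓ)·[[v₁,v₂],[v₂,−v₁]]·(x,y): if (x(t),y(t)) solves the linear system with (x,y) ≠ (0,0), then r(t) = ((x²−y²)/(x²+y²), 2xy/(x²+y²)) solves the bicycle equation ℓ·ṙ = −v + (v·r)r. -/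
open Real

/-!
Writing `r = (r₁, r₂)` for the image of `(x, y)` under the double cover, the angle of `r` is twice
the angle of `(x, y)`, so `r` rotates with twice the angular velocity `ω = (x ẏ - ẋ y) / (x² + y²)`
of `(x, y)`: `ṙ = 2ω · (-r₂, r₁)`. Along the linear system, `2ℓω = -(v₂ r₁ - v₁ r₂)`. On the other
hand the bicycle field `-v + (v·r) r` is, on the unit circle, the tangential part of `-v`, which is
the same multiple `-(v₂ r₁ - v₁ r₂)` of `(-r₂, r₁)`.
-/

theorem sq_add_sq_ne_zero_of_ne_zero {a b : ℝ} (h : (a, b) ≠ (0, 0)) : a ^ 2 + b ^ 2 ≠ 0 := by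
  simpa [sq, mul_self_add_mul_self_eq_zero] using h

section DoubleCover

variable {x y : ℝ → ℝ} {x' y' t : ℝ}

theorem hasDerivAt_doubleCover_fst (hx : HasDerivAt x x' t) (hy : HasDerivAt y y' t)
    (hN : x t ^ 2 + y t ^ 2 ≠ 0) :
    HasDerivAt (fun s => (x s ^ 2 - y s ^ 2) / (x s ^ 2 + y s ^ 2))
      (-(2 * x t * y t / (x t ^ 2 + y t ^ 2)) *
        (2 * (x t * y' - x' * y t) / (x t ^ 2 + y t ^ 2))) t := by
  refine (((hx.fun_pow 2).fun_sub (hy.fun_pow 2)).fun_div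
    ((hx.fun_pow 2).fun_add (hy.fun_pow 2)) hN).congr_deriv ?_
  field_simp
  ring

theorem hasDerivAt_doubleCover_snd (hx : HasDerivAt x x' t) (hy : HasDerivAt y y' t)
    (hN : x t ^ 2 + y t ^ 2 ≠ 0) :
    HasDerivAt (fun s => 2 * x s * y s / (x s ^ 2 + y s ^ 2))
      ((x t ^ 2 - y t ^ 2) / (x t ^ 2 + y t ^ 2) *
        (2 * (x t * y' - x' * y t) / (x t ^ 2 + y t ^ 2))) t := by
  refine (((hx.const_mul 2).fun_mul hy).fun_div
    ((hx.fun_pow 2).fun_add (hy.fun_pow 2)) hN).congr_deriv ?_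
  field_simp
  ring

end DoubleCover

theorem doubleCover_sq_add_sq {a b : ℝ} (hN : a ^ 2 + b ^ 2 ≠ 0) :
    ((a ^ 2 - b ^ 2) / (a ^ 2 + b ^ 2)) ^ 2 + (2 * a * b / (a ^ 2 + b ^ 2)) ^ 2 = 1 := by
  field_simp
  ring

theorem two_mul_angularVelocity_of_linearSystem {ℓ v₁ v₂ a b : ℝ} (hℓ : ℓ ≠ 0)
    (hN : a ^ 2 + b ^ 2 ≠ 0) :
    2 * (a * (-(1 / (2 * ℓ)) * (v₂ * a - v₁ * b)) - -(1 / (2 * ℓ)) * (v₁ * a + v₂ * b) * b) /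
        (a ^ 2 + b ^ 2) =
      -(v₂ * ((a ^ 2 - b ^ 2) / (a ^ 2 + b ^ 2)) - v₁ * (2 * a * b / (a ^ 2 + b ^ 2))) / ℓ := by
  field_simp
  ring

section Bicycle

variable {v₁ v₂ r₁ r₂ : ℝ}

theorem bicycleField_fst_of_sq_add_sq_eq_one (hr : r₁ ^ 2 + r₂ ^ 2 = 1) :
    -v₁ + (v₁ * r₁ + v₂ * r₂) * r₁ = -(-(v₂ * r₁ - v₁ * r₂) * r₂) := by
  linear_combination v₁ * hr

theorem bicycleField_snd_of_sq_add_sq_eq_one (hr : r₁ ^ 2 + r₂ ^ 2 = 1) :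
    -v₂ + (v₁ * r₁ + v₂ * r₂) * r₂ = -(v₂ * r₁ - v₁ * r₂) * r₁ := by
  linear_combination v₂ * hr

end Bicycle

theorem foote_double_cover_general
    (ℓ : ℝ) (hℓ : 0 < ℓ) (v₁ v₂ : ℝ → ℝ)
    (x y : ℝ → ℝ) (hx : ContDiff ℝ 1 x) (hy : ContDiff ℝ 1 y)
    (hne : ∀ t, (x t, y t) ≠ (0, 0))
    (hodex : ∀ t, deriv x t = -(1 / (2 * ℓ)) * (v₁ t * x t + v₂ t * y t))
    (hodey : ∀ t, deriv y t = -(1 / (2 * ℓ)) * (v₂ t * x t - v₁ t * y t))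
    (r₁ r₂ : ℝ → ℝ)
    (hr₁ : r₁ = fun t => (x t ^ 2 - y t ^ 2) / (x t ^ 2 + y t ^ 2))
    (hr₂ : r₂ = fun t => 2 * x t * y t / (x t ^ 2 + y t ^ 2)) :
    (∀ t, ℓ * deriv r₁ t = -v₁ t + (v₁ t * r₁ t + v₂ t * r₂ t) * r₁ t) ∧
    (∀ t, ℓ * deriv r₂ t = -v₂ t + (v₁ t * r₁ t + v₂ t * r₂ t) * r₂ t) := by
  subst hr₁ hr₂
  have hN t := sq_add_sq_ne_zero_of_ne_zero (hne t)
  have hX t : HasDerivAt x (deriv x t) t := (hx.differentiable one_ne_zero t).hasDerivAt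
  have hY t : HasDerivAt y (deriv y t) t := (hy.differentiable one_ne_zero t).hasDerivAt
  have hω t := two_mul_angularVelocity_of_linearSystem (v₁ := v₁ t) (v₂ := v₂ t) hℓ.ne' (hN t)
  constructor
  · intro t
    rw [(hasDerivAt_doubleCover_fst (hX t) (hY t) (hN t)).deriv, hodex, hodey, hω,
      bicycleField_fst_of_sq_add_sq_eq_one (doubleCover_sq_add_sq (hN t))]
    field_simp
  · intro t
    rw [(hasDerivAt_doubleCover_snd (hX t) (hY t) (hN t)).deriv, hodex, hodey, hω,
      bicycleField_snd_of_sq_add_sq_eq_one (doubleCover_sq_add_sq (hN t))]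
    field_simp

/-- Foote's theorem in dimension 2 (componentwise form): if (x,y) solves the linear
system (ẋ,ẏ) = −(1/2ℓ)·[[v₁,v₂],[v₂,−v₁]]·(x,y) and never vanishes, then its image
under the double cover (x,y) ↦ ((x²−y²)/(x²+y²), 2xy/(x²+y²)) solves the planar
bicycle equation ℓ·ṙ = −v + (v·r)r. -/
theorem foote_double_cover
    (ℓ : ℝ) (hℓ : 0 < ℓ) (v₁ v₂ : ℝ → ℝ) (hv₁ : Continuous v₁) (hv₂ : Continuous v₂)
    (x y : ℝ → ℝ) (hx : ContDiff ℝ 1 x) (hy : ContDiff ℝ 1 y)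
    (hne : ∀ t, (x t, y t) ≠ (0, 0))
    (hodex : ∀ t, deriv x t = -(1 / (2 * ℓ)) * (v₁ t * x t + v₂ t * y t))
    (hodey : ∀ t, deriv y t = -(1 / (2 * ℓ)) * (v₂ t * x t - v₁ t * y t))
    (r₁ r₂ : ℝ → ℝ)
    (hr₁ : r₁ = fun t => (x t ^ 2 - y t ^ 2) / (x t ^ 2 + y t ^ 2))
    (hr₂ : r₂ = fun t => 2 * x t * y t / (x t ^ 2 + y t ^ 2)) :
    (∀ t, ℓ * deriv r₁ t = -v₁ t + (v₁ t * r₁ t + v₂ t * r₂ t) * r₁ t) ∧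
    (∀ t, ℓ * deriv r₂ t = -v₂ t + (v₁ t * r₁ t + v₂ t * r₂ t) * r₂ t) :=
  foote_double_cover_general ℓ hℓ v₁ v₂ x y hx hy hne hodex hodey r₁ r₂ hr₁ hr₂
end

section
/- If (z₁,z₂) : ℝ → ℂ² \ {0} solves (ż₁,ż₂) = −(1/2ℓ)·[[v₁, v₂−iv₃],[v₂+iv₃, −v₁]]·(z₁,z₂) with v = (v₁,v₂,v₃) : ℝ → ℝ³, then r := ((|z₁|²−|z₂|²)/(|z₁|²+|z₂|²), 2·Re(z̄₁z₂)/(|z₁|²+|z₂|²), 2·Im(z̄₁z₂)/(|z₁|²+|z₂|²)) solves the bicycle equation ℓ·ṙ = −v + (v·r)r in ℝ³. -/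
/-!
Write `H = v₁ σ₁ + v₂ σ₂ + v₃ σ₃` for the Hermitian matrix of the system, so `ż = -(1/2ℓ) H z`,
where `σ₁ = diag(1, -1)` and `σ₂, σ₃` are the other two Pauli matrices. With `uᵢ = z* σᵢ z` and
`N = z* z = |z₁|² + |z₂|²` the Hopf map is `r = u / N`. The Pauli relations
`σᵢ σⱼ + σⱼ σᵢ = 2 δᵢⱼ` give `d(z* σᵢ z)/dt = -(1/2ℓ) z* (H σᵢ + σᵢ H) z`, i.e. `ℓ u̇ = -N v`,
and likewise `ℓ Ṅ = -v · u`. The quotient rule turns these two linear equations into the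
bicycle equation `ℓ ṙ = -v + (v · r) r`.
-/

open Complex ComplexConjugate

variable {f g : ℝ → ℂ} {f' g' : ℂ} {t : ℝ}

theorem HasDerivAt.complex_re (h : HasDerivAt f f' t) :
    HasDerivAt (fun s => (f s).re) f'.re t :=
  reCLM.hasFDerivAt.comp_hasDerivAt t h

theorem HasDerivAt.complex_im (h : HasDerivAt f f' t) :
    HasDerivAt (fun s => (f s).im) f'.im t :=
  imCLM.hasFDerivAt.comp_hasDerivAt t h

theorem HasDerivAt.conj_mul (hf : HasDerivAt f f' t) (hg : HasDerivAt g g' t) :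
    HasDerivAt (fun s => conj (f s) * g s) (conj f' * g t + conj (f t) * g') t :=
  hf.star.mul hg

theorem HasDerivAt.normSq (hf : HasDerivAt f f' t) :
    HasDerivAt (fun s => normSq (f s)) (2 * (conj (f t) * f').re) t := by
  refine ((hf.conj_mul hf).complex_re.congr_deriv ?_).congr_of_eventuallyEq ?_
  · simp only [add_re, mul_re, conj_re, conj_im]
    ring
  · filter_upwards with s
    simp [normSq_apply, mul_comm]

theorem normSq_add_normSq_ne_zero {p q : ℂ} (h : (p, q) ≠ (0, 0)) : normSq p + normSq q ≠ 0 := by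
  contrapose! h
  rw [add_eq_zero_iff_of_nonneg (normSq_nonneg p) (normSq_nonneg q), normSq_eq_zero,
    normSq_eq_zero] at h
  rw [h.1, h.2]

theorem mul_deriv_div_of_hasDerivAt {ℓ a s : ℝ} {u N : ℝ → ℝ} (hℓ : ℓ ≠ 0)
    (hu : HasDerivAt u (-(a * N t) / ℓ) t) (hN : HasDerivAt N (-s / ℓ) t) (hN₀ : N t ≠ 0) :
    ℓ * deriv (fun s => u s / N s) t = -a + s / N t * (u t / N t) := by
  change ℓ * deriv (u / N) t = _
  rw [(hu.div hN hN₀).deriv]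
  field_simp
  ring

namespace SpinorFlow

variable {ℓ v₁ v₂ v₃ : ℝ} {z₁ z₂ : ℝ → ℂ}
  (h₁ : HasDerivAt z₁
    (-(1 / (2 * ℓ) : ℂ) * ((v₁ : ℂ) * z₁ t + ((v₂ : ℂ) - I * (v₃ : ℂ)) * z₂ t)) t)
  (h₂ : HasDerivAt z₂
    (-(1 / (2 * ℓ) : ℂ) * (((v₂ : ℂ) + I * (v₃ : ℂ)) * z₁ t - (v₁ : ℂ) * z₂ t)) t)
include h₁ h₂

theorem hasDerivAt_normSq_add_normSq :
    HasDerivAt (fun s => normSq (z₁ s) + normSq (z₂ s))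
      (-(v₁ * (normSq (z₁ t) - normSq (z₂ t)) + v₂ * (2 * (conj (z₁ t) * z₂ t).re)
        + v₃ * (2 * (conj (z₁ t) * z₂ t).im)) / ℓ) t :=
  (h₁.normSq.add h₂.normSq).congr_deriv (by simp [mul_re, mul_im, normSq_apply]; ring)

theorem hasDerivAt_normSq_sub_normSq :
    HasDerivAt (fun s => normSq (z₁ s) - normSq (z₂ s))
      (-(v₁ * (normSq (z₁ t) + normSq (z₂ t))) / ℓ) t :=
  (h₁.normSq.sub h₂.normSq).congr_deriv (by simp [mul_re, mul_im, normSq_apply]; ring)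

theorem hasDerivAt_two_mul_re_conj_mul :
    HasDerivAt (fun s => 2 * (conj (z₁ s) * z₂ s).re)
      (-(v₂ * (normSq (z₁ t) + normSq (z₂ t))) / ℓ) t :=
  ((h₁.conj_mul h₂).complex_re.const_mul 2).congr_deriv
    (by simp [mul_re, mul_im, normSq_apply]; ring)

theorem hasDerivAt_two_mul_im_conj_mul :
    HasDerivAt (fun s => 2 * (conj (z₁ s) * z₂ s).im)
      (-(v₃ * (normSq (z₁ t) + normSq (z₂ t))) / ℓ) t :=
  ((h₁.conj_mul h₂).complex_im.const_mul 2).congr_deriv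
    (by simp [mul_re, mul_im, normSq_apply]; ring)

end SpinorFlow

open SpinorFlow in
theorem foote_hopf_fibration_general
    (ℓ : ℝ) (hℓ : 0 < ℓ) (v₁ v₂ v₃ : ℝ → ℝ)
    (z₁ z₂ : ℝ → ℂ) (hz₁ : ContDiff ℝ 1 z₁) (hz₂ : ContDiff ℝ 1 z₂)
    (hne : ∀ t, (z₁ t, z₂ t) ≠ (0, 0))
    (hode₁ : ∀ t, deriv z₁ t =
      -(1 / (2 * ℓ) : ℂ) * ((v₁ t : ℂ) * z₁ t + ((v₂ t : ℂ) - I * (v₃ t : ℂ)) * z₂ t))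
    (hode₂ : ∀ t, deriv z₂ t =
      -(1 / (2 * ℓ) : ℂ) * (((v₂ t : ℂ) + I * (v₃ t : ℂ)) * z₁ t - (v₁ t : ℂ) * z₂ t))
    (r₁ r₂ r₃ : ℝ → ℝ)
    (hr₁ : r₁ = fun t => (normSq (z₁ t) - normSq (z₂ t)) / (normSq (z₁ t) + normSq (z₂ t)))
    (hr₂ : r₂ = fun t => 2 * ((starRingEnd ℂ) (z₁ t) * z₂ t).re / (normSq (z₁ t) + normSq (z₂ t)))
    (hr₃ : r₃ = fun t => 2 * ((starRingEnd ℂ) (z₁ t) * z₂ t).im / (normSq (z₁ t) + normSq (z₂ t))) :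
    (∀ t, ℓ * deriv r₁ t = -v₁ t + (v₁ t * r₁ t + v₂ t * r₂ t + v₃ t * r₃ t) * r₁ t) ∧
    (∀ t, ℓ * deriv r₂ t = -v₂ t + (v₁ t * r₁ t + v₂ t * r₂ t + v₃ t * r₃ t) * r₂ t) ∧
    (∀ t, ℓ * deriv r₃ t = -v₃ t + (v₁ t * r₁ t + v₂ t * r₂ t + v₃ t * r₃ t) * r₃ t) := by
  subst hr₁ hr₂ hr₃
  have h₁ t := hode₁ t ▸ (hz₁.differentiable one_ne_zero t).hasDerivAt
  have h₂ t := hode₂ t ▸ (hz₂.differentiable one_ne_zero t).hasDerivAt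
  have bicycle t {u a} := mul_deriv_div_of_hasDerivAt (u := u) (a := a) hℓ.ne'
    (hN := hasDerivAt_normSq_add_normSq (h₁ t) (h₂ t)) (hN₀ := normSq_add_normSq_ne_zero (hne t))
  refine ⟨fun t => ?_, fun t => ?_, fun t => ?_⟩
  · rw [bicycle t (hasDerivAt_normSq_sub_normSq (h₁ t) (h₂ t))]
    ring
  · rw [bicycle t (hasDerivAt_two_mul_re_conj_mul (h₁ t) (h₂ t))]
    ring
  · rw [bicycle t (hasDerivAt_two_mul_im_conj_mul (h₁ t) (h₂ t))]
    ring

/-- Foote's theorem in dimension 3: a nonvanishing solution of the complex 2×2 linear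
system projects, via the Hopf fibration, to a solution of the bicycle equation in ℝ³
(written componentwise). -/
theorem foote_hopf_fibration
    (ℓ : ℝ) (hℓ : 0 < ℓ) (v₁ v₂ v₃ : ℝ → ℝ)
    (hv₁ : Continuous v₁) (hv₂ : Continuous v₂) (hv₃ : Continuous v₃)
    (z₁ z₂ : ℝ → ℂ) (hz₁ : ContDiff ℝ 1 z₁) (hz₂ : ContDiff ℝ 1 z₂)
    (hne : ∀ t, (z₁ t, z₂ t) ≠ (0, 0))
    (hode₁ : ∀ t, deriv z₁ t =
      -(1 / (2 * ℓ) : ℂ) * ((v₁ t : ℂ) * z₁ t + ((v₂ t : ℂ) - I * (v₃ t : ℂ)) * z₂ t))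
    (hode₂ : ∀ t, deriv z₂ t =
      -(1 / (2 * ℓ) : ℂ) * (((v₂ t : ℂ) + I * (v₃ t : ℂ)) * z₁ t - (v₁ t : ℂ) * z₂ t))
    (r₁ r₂ r₃ : ℝ → ℝ)
    (hr₁ : r₁ = fun t => (normSq (z₁ t) - normSq (z₂ t)) / (normSq (z₁ t) + normSq (z₂ t)))
    (hr₂ : r₂ = fun t => 2 * ((starRingEnd ℂ) (z₁ t) * z₂ t).re / (normSq (z₁ t) + normSq (z₂ t)))
    (hr₃ : r₃ = fun t => 2 * ((starRingEnd ℂ) (z₁ t) * z₂ t).im / (normSq (z₁ t) + normSq (z₂ t))) :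
    (∀ t, ℓ * deriv r₁ t = -v₁ t + (v₁ t * r₁ t + v₂ t * r₂ t + v₃ t * r₃ t) * r₁ t) ∧
    (∀ t, ℓ * deriv r₂ t = -v₂ t + (v₁ t * r₁ t + v₂ t * r₂ t + v₃ t * r₃ t) * r₂ t) ∧
    (∀ t, ℓ * deriv r₃ t = -v₃ t + (v₁ t * r₁ t + v₂ t * r₂ t + v₃ t * r₃ t) * r₃ t) :=
  foote_hopf_fibration_general ℓ hℓ v₁ v₂ v₃ z₁ z₂ hz₁ hz₂ hne hode₁ hode₂ r₁ r₂ r₃ hr₁ hr₂ hr₃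
end

section
/- Linearized bicycle flow formula: if r solves the bicycle equation ℓ·ṙ = −v + (v·r)r on S^{n−1} and ξ(t) ∈ T_{r(t)}S^{n−1} solves the linearization ℓ·ξ̇ = (v·ξ)r + (v·r)ξ, then ξ(t) = f(t)·ξ̂(t), where ξ̂ is the parallel transport of ξ(t₀) along r(t) in S^{n−1} (Levi-Civita) and f(t) = exp(∫_{t₀}^t (r·v)/ℓ ds). -/
/-!
Rescale ξ by the integrating factor `exp (-∫ (r·v)/ℓ)`: the linearized equation then says that
the derivative of the rescaled field is a multiple of `r`, i.e. it is parallel along `r`, just as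
`ξhat` is. The difference of two parallel fields is parallel, hence of constant norm, and it
vanishes at `t₀`.
-/

open RealInnerProductSpace

theorem hasDerivAt_exp_neg_smul {G : Type*} [NormedAddCommGroup G] [NormedSpace ℝ G]
    {F : ℝ → ℝ} {ξ : ℝ → G} {a b t : ℝ} {x : G}
    (hF : HasDerivAt F a t) (hξ : HasDerivAt ξ (a • ξ t + b • x) t) :
    HasDerivAt (fun s => Real.exp (-F s) • ξ s) ((Real.exp (-F t) * b) • x) t :=
  (hF.neg.exp.smul hξ).congr_deriv (by module)

variable {E : Type*} [NormedAddCommGroup E] [InnerProductSpace ℝ E]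

theorem norm_eq_of_inner_hasDerivAt_eq_zero {w w' : ℝ → E} (hw : ∀ t, HasDerivAt w (w' t) t)
    (horth : ∀ t, ⟪w t, w' t⟫ = 0) (s t : ℝ) : ‖w s‖ = ‖w t‖ := by
  have hsq : ∀ t, HasDerivAt (fun t => ‖w t‖ ^ 2) 0 t := fun t => by
    simpa [horth t] using (hw t).norm_sq
  have hconst := is_const_of_deriv_eq_zero (fun t => (hsq t).differentiableAt)
    (fun t => (hsq t).deriv) s t
  exact (sq_eq_sq₀ (norm_nonneg _) (norm_nonneg _)).mp hconst

/-- When `r` runs on the unit sphere, this says that `u` is a Levi-Civita parallel field along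
`r`: `u` is tangent to the sphere and its covariant derivative, the tangential part of `u'`,
vanishes. -/
def IsParallelAlong (r u : ℝ → E) : Prop :=
  (∀ t, ⟪u t, r t⟫ = 0) ∧ ∀ t, ∃ c : ℝ, HasDerivAt u (c • r t) t

namespace IsParallelAlong

variable {r u u' : ℝ → E}

theorem sub (hu : IsParallelAlong r u) (hu' : IsParallelAlong r u') :
    IsParallelAlong r (u - u') := by
  refine ⟨fun t => by simp [inner_sub_left, hu.1 t, hu'.1 t], fun t => ?_⟩
  obtain ⟨c, hc⟩ := hu.2 t
  obtain ⟨c', hc'⟩ := hu'.2 t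
  exact ⟨c - c', by simpa [sub_smul] using hc.sub hc'⟩

theorem norm_eq (hu : IsParallelAlong r u) (s t : ℝ) : ‖u s‖ = ‖u t‖ := by
  choose c hc using hu.2
  refine norm_eq_of_inner_hasDerivAt_eq_zero hc (fun t => ?_) s t
  rw [inner_smul_right, hu.1 t, mul_zero]

theorem eq_of_eq (hu : IsParallelAlong r u) (hu' : IsParallelAlong r u') {t₀ : ℝ}
    (h : u t₀ = u' t₀) : u = u' := by
  funext t
  have hnorm := (hu.sub hu').norm_eq t t₀
  rwa [Pi.sub_apply, Pi.sub_apply, h, sub_self, norm_zero, norm_eq_zero, sub_eq_zero] at hnorm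

end IsParallelAlong

theorem linearized_bicycle_flow_general
    {n : ℕ} (ℓ : ℝ) (hℓ : 0 < ℓ) (v r ξ ξhat : ℝ → EuclideanSpace ℝ (Fin n))
    (hv : Continuous v) (hr : Differentiable ℝ r)
    (hξ : Differentiable ℝ ξ) (hξtan : ∀ t, ⟪ξ t, r t⟫ = 0)
    (hlin : ∀ t, ℓ • deriv ξ t = ⟪v t, ξ t⟫ • r t + ⟪v t, r t⟫ • ξ t)
    (hξhat : Differentiable ℝ ξhat) (hξhattan : ∀ t, ⟪ξhat t, r t⟫ = 0)
    (hparallel : ∀ t, ∃ c : ℝ, deriv ξhat t = c • r t)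
    (t₀ : ℝ) (hinit : ξhat t₀ = ξ t₀) :
    ∀ t, ξ t = Real.exp (∫ s in t₀..t, ⟪r s, v s⟫ / ℓ) • ξhat t := by
  set F : ℝ → ℝ := fun t => ∫ s in t₀..t, ⟪r s, v s⟫ / ℓ
  have hF : ∀ t, HasDerivAt F (⟪r t, v t⟫ / ℓ) t := fun t =>
    (((hr.continuous.inner hv).div_const ℓ).integral_hasStrictDerivAt t₀ t).hasDerivAt
  have hξ_deriv : ∀ t, HasDerivAt ξ ((⟪r t, v t⟫ / ℓ) • ξ t + (⟪v t, ξ t⟫ / ℓ) • r t) t := fun t => by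
    refine (hξ t).hasDerivAt.congr_deriv ?_
    rw [← inv_smul_smul₀ hℓ.ne' (deriv ξ t), hlin t, real_inner_comm (r t)]
    module
  have hrescaled : IsParallelAlong r fun t => Real.exp (-F t) • ξ t :=
    ⟨fun t => by rw [inner_smul_left, hξtan t, mul_zero],
      fun t => ⟨_, hasDerivAt_exp_neg_smul (hF t) (hξ_deriv t)⟩⟩
  have hξhat_parallel : IsParallelAlong r ξhat := by
    refine ⟨hξhattan, fun t => ?_⟩
    obtain ⟨c, hc⟩ := hparallel t
    exact ⟨c, hc ▸ (hξhat t).hasDerivAt⟩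
  have hrescaled_init : Real.exp (-F t₀) • ξ t₀ = ξhat t₀ := by simp [F, hinit]
  have heq := hrescaled.eq_of_eq hξhat_parallel hrescaled_init
  intro t
  rw [← congrFun heq t, smul_smul, ← Real.exp_add, add_neg_cancel, Real.exp_zero, one_smul]

/-- Linearized bicycle flow (Theorem on the derivative of the monodromy): if ξ solves the
linearization of the bicycle equation along a solution r on the unit sphere, and ξ̂ is the
parallel transport of ξ(t₀) along r (i.e. ξ̂ ⟂ r with derivative normal to the sphere),
then ξ(t) = exp(∫_{t₀}^t (r·v)/ℓ) · ξ̂(t). -/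
theorem linearized_bicycle_flow
    {n : ℕ} (ℓ : ℝ) (hℓ : 0 < ℓ) (v r ξ ξhat : ℝ → EuclideanSpace ℝ (Fin n))
    (hv : Continuous v) (hr : Differentiable ℝ r) (hunit : ∀ t, ‖r t‖ = 1)
    (hode : ∀ t, ℓ • deriv r t = -v t + ⟪v t, r t⟫ • r t)
    (hξ : Differentiable ℝ ξ) (hξtan : ∀ t, ⟪ξ t, r t⟫ = 0)
    (hlin : ∀ t, ℓ • deriv ξ t = ⟪v t, ξ t⟫ • r t + ⟪v t, r t⟫ • ξ t)
    (hξhat : Differentiable ℝ ξhat) (hξhattan : ∀ t, ⟪ξhat t, r t⟫ = 0)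
    (hparallel : ∀ t, ∃ c : ℝ, deriv ξhat t = c • r t)
    (t₀ : ℝ) (hinit : ξhat t₀ = ξ t₀) :
    ∀ t, ξ t = Real.exp (∫ s in t₀..t, ⟪r s, v s⟫ / ℓ) • ξhat t :=
  linearized_bicycle_flow_general ℓ hℓ v r ξ ξhat hv hr hξ hξtan hlin hξhat hξhattan hparallel t₀
    hinit
end

section
/- Bicycle planimeter in ℝⁿ: let Γ : [0,L] → ℝⁿ be a smooth closed curve and r(t,ε) the solution of ṙ = ε(−v + (v·r)r), r(0,ε) = r₀ with ‖r₀‖ = 1 and v = Γ̇. Then r(L,ε) = r₀ + ε²·A r₀ + O(ε³), where A : ℝⁿ → ℝⁿ is the skew-symmetric area operator A r₀ = ∫₀ᴸ (Γ·r₀)·Γ̇ dt. -/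
open RealInnerProductSpace

set_option maxHeartbeats 2000000 in
/-- The bicycle as a planimeter in ℝⁿ: for a long bicycle (length 1/ε) ridden around a
smooth closed front track Γ of length L, the direction vector undergoes, up to O(ε³),
the rigid rotation by ε² times the skew-symmetric area operator of Γ:
r(L,ε) = r₀ + ε²·A r₀ + O(ε³), with A r₀ = ∫₀ᴸ (Γ·r₀)·Γ̇ dt. -/
theorem bicycle_planimeter
    {n : ℕ} (L : ℝ) (hL : 0 < L) (Γ : ℝ → EuclideanSpace ℝ (Fin n))
    (hΓ : ContDiff ℝ (⊤ : ℕ∞) Γ) (hper : ∀ t, Γ (t + L) = Γ t)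
    (r₀ : EuclideanSpace ℝ (Fin n)) (hr₀ : ‖r₀‖ = 1)
    (r : ℝ → ℝ → EuclideanSpace ℝ (Fin n))
    (hode : ∀ ε t, HasDerivAt (fun s => r s ε)
      (ε • (-deriv Γ t + ⟪deriv Γ t, r t ε⟫ • r t ε)) t)
    (hinit : ∀ ε, r 0 ε = r₀) :
    ∃ C ε₀ : ℝ, 0 < C ∧ 0 < ε₀ ∧ ∀ ε : ℝ, |ε| ≤ ε₀ →
      ‖r L ε - r₀ - ε ^ 2 • ∫ t in (0:ℝ)..L, ⟪Γ t, r₀⟫ • deriv Γ t‖ ≤ C * |ε| ^ 3 := by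
  classical
  set v : ℝ → EuclideanSpace ℝ (Fin n) := deriv Γ with hv_def
  have hv : Continuous v := hΓ.continuous_deriv (by simp)
  have hΓd : Differentiable ℝ Γ := hΓ.differentiable (by simp)
  have hΓc : Continuous Γ := hΓd.continuous
  have hΓL : Γ L = Γ 0 := by simpa using hper 0
  obtain ⟨M₀, hM₀⟩ := (isCompact_Icc : IsCompact (Set.Icc (0:ℝ) L)).exists_bound_of_continuousOn
    hv.continuousOn
  obtain ⟨M, hM_def⟩ : ∃ M : ℝ, M = max M₀ 1 := ⟨_, rfl⟩
  have hM1 : (1:ℝ) ≤ M := hM_def ▸ le_max_right _ _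
  have hM0 : (0:ℝ) < M := lt_of_lt_of_le one_pos hM1
  have hM : ∀ t ∈ Set.Icc (0:ℝ) L, ‖v t‖ ≤ M :=
    fun t ht => (hM₀ t ht).trans (hM_def ▸ le_max_left _ _)
  obtain ⟨R, hR_def⟩ : ∃ R : ℝ, R = ‖r₀‖ := ⟨_, rfl⟩
  have hR : 0 ≤ R := hR_def ▸ norm_nonneg _
  have hRr : ‖r₀‖ = R := hR_def.symm
  obtain ⟨B, hB_def⟩ : ∃ B : ℝ, B = R + 1 := ⟨_, rfl⟩
  have hB : 0 < B := by rw [hB_def]; linarith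
  obtain ⟨K, hK_def⟩ : ∃ K : ℝ, K = M * (1 + B ^ 2) := ⟨_, rfl⟩
  have hK : 0 < K := by rw [hK_def]; positivity
  obtain ⟨ε₀, hε₀_def⟩ : ∃ e : ℝ, e = 1 / (2 * K * L) := ⟨_, rfl⟩
  have hε₀ : 0 < ε₀ := by rw [hε₀_def]; positivity
  -- continuity of solutions
  have hrc : ∀ ε : ℝ, Continuous (fun t => r t ε) := fun ε =>
    continuous_iff_continuousAt.mpr fun t => (hode ε t).differentiableAt.continuousAt
  -- continuity of the vector field along solutions
  have hWc : ∀ ε : ℝ, Continuous (fun t => ε • (-v t + ⟪v t, r t ε⟫ • r t ε)) := fun ε =>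
    (((hv.neg).add ((hv.inner (𝕜 := ℝ) (hrc ε)).smul (hrc ε))).const_smul ε)
  -- integral equation
  have hFTC : ∀ (ε : ℝ) (t : ℝ),
      r t ε - r₀ = ∫ s in (0:ℝ)..t, ε • (-v s + ⟪v s, r s ε⟫ • r s ε) := by
    intro ε t
    rw [intervalIntegral.integral_eq_sub_of_hasDerivAt (fun s _ => hode ε s)
      ((hWc ε).intervalIntegrable 0 t), hinit]
  -- pointwise bound on the vector field when the solution is close
  have hfield : ∀ (ε : ℝ) (s : ℝ), s ∈ Set.Icc (0:ℝ) L → ‖r s ε - r₀‖ ≤ 1 →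
      ‖ε • (-v s + ⟪v s, r s ε⟫ • r s ε)‖ ≤ |ε| * K := by
    intro ε s hs hclose
    have hrB : ‖r s ε‖ ≤ B := by
      calc ‖r s ε‖ = ‖(r s ε - r₀) + r₀‖ := by rw [sub_add_cancel]
        _ ≤ ‖r s ε - r₀‖ + ‖r₀‖ := norm_add_le _ _
        _ ≤ 1 + R := by linarith [hRr]
        _ = B := by rw [hB_def]; ring
    have hvs : ‖v s‖ ≤ M := hM s hs
    have h1 : ‖(-v s + ⟪v s, r s ε⟫ • r s ε)‖ ≤ K := by
      calc ‖(-v s + ⟪v s, r s ε⟫ • r s ε)‖ ≤ ‖v s‖ + |⟪v s, r s ε⟫| * ‖r s ε‖ := by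
            refine (norm_add_le _ _).trans ?_
            rw [norm_neg, norm_smul, Real.norm_eq_abs]
        _ ≤ M + (M * B) * B := by
            have := abs_real_inner_le_norm (v s) (r s ε)
            have h2 : |⟪v s, r s ε⟫| ≤ M * B := by
              refine this.trans ?_
              exact mul_le_mul hvs hrB (norm_nonneg _) hM0.le
            have h3 : (0:ℝ) ≤ ‖r s ε‖ := norm_nonneg _
            nlinarith [abs_nonneg (⟪v s, r s ε⟫ : ℝ)]
        _ = K := by rw [hK_def]; ring
    rw [norm_smul, Real.norm_eq_abs]
    exact mul_le_mul_of_nonneg_left h1 (abs_nonneg ε)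
  -- a priori bound (continuous induction)
  have claim1 : ∀ ε : ℝ, |ε| ≤ ε₀ → ∀ t ∈ Set.Icc (0:ℝ) L, ‖r t ε - r₀‖ ≤ 1 := by
    intro ε hε
    by_contra hcon
    push_neg at hcon
    obtain ⟨t₁, ht₁, ht₁'⟩ := hcon
    set S : Set ℝ := Set.Icc (0:ℝ) L ∩ {t | 1 ≤ ‖r t ε - r₀‖} with hS_def
    have hSne : S.Nonempty := ⟨t₁, ht₁, ht₁'.le⟩
    have hSclosed : IsClosed S := isClosed_Icc.inter
      (isClosed_le continuous_const (((hrc ε).sub continuous_const).norm))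
    have hSbdd : BddBelow S := ⟨0, fun x hx => hx.1.1⟩
    set T : ℝ := sInf S with hT_def
    have hTS : T ∈ S := hSclosed.csInf_mem hSne hSbdd
    have hT0 : 0 < T := by
      rcases lt_or_eq_of_le hTS.1.1 with h | h
      · exact h
      · exfalso
        have : (1:ℝ) ≤ ‖r T ε - r₀‖ := hTS.2
        rw [← h, hinit, sub_self, norm_zero] at this
        linarith
    have hsmall : ∀ u ∈ Set.Ioo (0:ℝ) T, ‖r u ε - r₀‖ ≤ 1/2 := by
      intro u hu
      have huL : u ∈ Set.Icc (0:ℝ) L := ⟨hu.1.le, hu.2.le.trans hTS.1.2⟩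
      rw [hFTC ε u]
      have hbnd := intervalIntegral.norm_integral_le_of_norm_le_const (C := |ε| * K)
        (f := fun s => ε • (-v s + ⟪v s, r s ε⟫ • r s ε)) (a := 0) (b := u) ?_
      · refine hbnd.trans ?_
        rw [sub_zero, abs_of_nonneg hu.1.le]
        have h1 : |ε| * K * u ≤ ε₀ * K * L := by
          nlinarith [mul_nonneg (mul_nonneg (sub_nonneg.mpr hε) hK.le) hu.1.le,
            mul_nonneg (mul_nonneg hε₀.le hK.le)
              (sub_nonneg.mpr (hu.2.le.trans hTS.1.2))]
        have h2 : ε₀ * K * L = 1/2 := by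
          rw [hε₀_def]; field_simp
        linarith
      · intro x hx
        rw [Set.uIoc_of_le hu.1.le] at hx
        have hxL : x ∈ Set.Icc (0:ℝ) L := ⟨hx.1.le, hx.2.trans huL.2⟩
        have hxT : x < T := lt_of_le_of_lt hx.2 hu.2
        have hclose : ‖r x ε - r₀‖ ≤ 1 := by
          by_contra hc
          push_neg at hc
          have : x ∈ S := ⟨hxL, hc.le⟩
          exact absurd (csInf_le hSbdd this) (not_le.mpr hxT)
        exact hfield ε x hxL hclose
    have hlim : ‖r T ε - r₀‖ ≤ 1/2 := by
      have htend : Filter.Tendsto (fun u => ‖r u ε - r₀‖) (nhdsWithin T (Set.Iio T))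
          (nhds ‖r T ε - r₀‖) :=
        ((((hrc ε).sub continuous_const).norm).tendsto T).mono_left nhdsWithin_le_nhds
      refine le_of_tendsto htend ?_
      filter_upwards [Ioo_mem_nhdsLT_of_mem (Set.mem_Ioc.mpr ⟨hT0, le_refl T⟩)] with u hu
      exact hsmall u hu
    have : (1:ℝ) ≤ ‖r T ε - r₀‖ := hTS.2
    linarith
  -- refined first-order bound
  have claim2 : ∀ ε : ℝ, |ε| ≤ ε₀ → ∀ t ∈ Set.Icc (0:ℝ) L, ‖r t ε - r₀‖ ≤ |ε| * K * L := by
    intro ε hε t ht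
    rw [hFTC ε t]
    have := intervalIntegral.norm_integral_le_of_norm_le_const (C := |ε| * K)
      (f := fun s => ε • (-v s + ⟪v s, r s ε⟫ • r s ε)) (a := 0) (b := t) ?_
    · refine this.trans ?_
      rw [sub_zero, abs_of_nonneg ht.1]
      have : |ε| * K ≥ 0 := by positivity
      nlinarith [ht.2]
    · intro x hx
      rw [Set.uIoc_of_le ht.1] at hx
      have hx' : x ∈ Set.Icc (0:ℝ) L := ⟨hx.1.le, hx.2.trans ht.2⟩
      exact hfield ε x hx' (claim1 ε hε x hx')
  -- norm bound on solutions
  have hrB : ∀ ε : ℝ, |ε| ≤ ε₀ → ∀ x ∈ Set.Icc (0:ℝ) L, ‖r x ε‖ ≤ B := by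
    intro ε hε x hx
    have h := claim1 ε hε x hx
    calc ‖r x ε‖ = ‖r x ε - r₀ + r₀‖ := by rw [sub_add_cancel]
      _ ≤ ‖r x ε - r₀‖ + ‖r₀‖ := norm_add_le _ _
      _ ≤ 1 + R := by linarith [hRr]
      _ = B := by rw [hB_def]; ring
  -- constants
  obtain ⟨C₂, hC₂_def⟩ : ∃ c : ℝ, c = M * (B + R) * K * L * L := ⟨_, rfl⟩
  have hC₂ : 0 < C₂ := by rw [hC₂_def]; positivity
  obtain ⟨C₅, hC₅_def⟩ : ∃ c : ℝ, c = M * C₂ * B + M * K * L * (K * L + C₂ * ε₀) + M * R * C₂ :=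
    ⟨_, rfl⟩
  have hC₅ : 0 < C₅ := by rw [hC₅_def]; positivity
  refine ⟨C₅ * L, ε₀, by positivity, hε₀, ?_⟩
  intro ε hε
  -- the first-order corrector ρ
  set ρ : ℝ → EuclideanSpace ℝ (Fin n) := fun t => -(Γ t - Γ 0) + ⟪Γ t - Γ 0, r₀⟫ • r₀ with hρ_def
  have hρc : Continuous ρ :=
    ((hΓc.sub continuous_const).neg).add
      (((hΓc.sub continuous_const).inner (𝕜 := ℝ) continuous_const).smul continuous_const)
  have hρ0 : ρ 0 = 0 := by
    simp only [hρ_def, sub_self, inner_zero_left, zero_smul, neg_zero, add_zero]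
  have hρ' : ∀ t, HasDerivAt ρ (-v t + ⟪v t, r₀⟫ • r₀) t := by
    intro t
    have h1 : HasDerivAt Γ (v t) t := (hΓd t).hasDerivAt
    have h2 : HasDerivAt (fun t => Γ t - Γ 0) (v t) t := h1.sub_const _
    have h3 : HasDerivAt (fun t => (⟪Γ t - Γ 0, r₀⟫ : ℝ)) ⟪v t, r₀⟫ t := by
      simpa using (HasDerivAt.inner ℝ h2 (hasDerivAt_const t r₀))
    exact h2.neg.add (h3.smul_const r₀)
  -- the second-order error E
  set E : ℝ → EuclideanSpace ℝ (Fin n) := fun t => r t ε - r₀ - ε • ρ t with hE_def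
  have hEc : Continuous E := (((hrc ε).sub continuous_const).sub (hρc.const_smul ε))
  have hE0 : E 0 = 0 := by
    simp only [hE_def, hinit, hρ0, smul_zero, sub_zero, sub_self]
  have hE' : ∀ t, HasDerivAt E
      (ε • (⟪v t, r t ε - r₀⟫ • r t ε + ⟪v t, r₀⟫ • (r t ε - r₀))) t := by
    intro t
    have h : HasDerivAt E
        ((ε • (-v t + ⟪v t, r t ε⟫ • r t ε)) - ε • (-v t + ⟪v t, r₀⟫ • r₀)) t :=
      ((hode ε t).sub_const r₀).sub ((hρ' t).const_smul ε)
    convert h using 1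
    rw [inner_sub_right]
    module
  have hE'c : Continuous (fun s => ε • (⟪v s, r s ε - r₀⟫ • r s ε + ⟪v s, r₀⟫ • (r s ε - r₀))) :=
    (((hv.inner (𝕜 := ℝ) ((hrc ε).sub continuous_const)).smul (hrc ε)).add
      ((hv.inner (𝕜 := ℝ) continuous_const).smul ((hrc ε).sub continuous_const))).const_smul ε
  have hEbound : ∀ t ∈ Set.Icc (0:ℝ) L, ‖E t‖ ≤ C₂ * ε ^ 2 := by
    intro t ht
    have hEt : E t = ∫ s in (0:ℝ)..t,
        ε • (⟪v s, r s ε - r₀⟫ • r s ε + ⟪v s, r₀⟫ • (r s ε - r₀)) := by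
      rw [intervalIntegral.integral_eq_sub_of_hasDerivAt (fun s _ => hE' s)
        (hE'c.intervalIntegrable 0 t), hE0, sub_zero]
    rw [hEt]
    have hbnd := intervalIntegral.norm_integral_le_of_norm_le_const
      (C := |ε| * (M * (B + R) * (|ε| * K * L)))
      (f := fun s => ε • (⟪v s, r s ε - r₀⟫ • r s ε + ⟪v s, r₀⟫ • (r s ε - r₀)))
      (a := 0) (b := t) ?_
    · refine hbnd.trans ?_
      rw [sub_zero, abs_of_nonneg ht.1]
      have h3 : |ε| * (M * (B + R) * (|ε| * K * L)) * t
          = (M * (B + R) * K * L) * ε ^ 2 * t := by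
        rw [← sq_abs ε]; ring
      rw [h3]
      have h4 : (M * (B + R) * K * L) * ε ^ 2 * t ≤ (M * (B + R) * K * L) * ε ^ 2 * L :=
        mul_le_mul_of_nonneg_left ht.2 (by positivity)
      refine h4.trans (le_of_eq ?_)
      rw [hC₂_def]; ring
    · intro x hx
      rw [Set.uIoc_of_le ht.1] at hx
      have hxL : x ∈ Set.Icc (0:ℝ) L := ⟨hx.1.le, hx.2.trans ht.2⟩
      have hvx := hM x hxL
      have hδx := claim2 ε hε x hxL
      have hrx := hrB ε hε x hxL
      rw [norm_smul, Real.norm_eq_abs]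
      have h1 : ‖⟪v x, r x ε - r₀⟫ • r x ε‖ ≤ (M * (|ε| * K * L)) * B := by
        rw [norm_smul, Real.norm_eq_abs]
        exact mul_le_mul ((abs_real_inner_le_norm _ _).trans
          (mul_le_mul hvx hδx (norm_nonneg _) hM0.le)) hrx (norm_nonneg _) (by positivity)
      have h2 : ‖⟪v x, r₀⟫ • (r x ε - r₀)‖ ≤ (M * R) * (|ε| * K * L) := by
        rw [norm_smul, Real.norm_eq_abs]
        have hvr : ‖v x‖ * ‖r₀‖ ≤ M * R := by
          rw [hRr]; exact mul_le_mul_of_nonneg_right hvx hR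
        exact mul_le_mul ((abs_real_inner_le_norm _ _).trans hvr) hδx
          (norm_nonneg _) (by positivity)
      have hsum := (norm_add_le (⟪v x, r x ε - r₀⟫ • r x ε) (⟪v x, r₀⟫ • (r x ε - r₀))).trans
        (add_le_add h1 h2)
      refine (mul_le_mul_of_nonneg_left hsum (abs_nonneg ε)).trans (le_of_eq ?_)
      ring
  -- decomposition of the vector field
  set P₀ : ℝ → EuclideanSpace ℝ (Fin n) := fun t => -v t + ⟪v t, r₀⟫ • r₀ with hP₀_def
  set P₁ : ℝ → EuclideanSpace ℝ (Fin n) := fun t => ⟪v t, ρ t⟫ • r₀ + ⟪v t, r₀⟫ • ρ t with hP₁_def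
  set Q : ℝ → EuclideanSpace ℝ (Fin n) := fun t =>
    ε • (-v t + ⟪v t, r t ε⟫ • r t ε) - ε • P₀ t - ε ^ 2 • P₁ t with hQ_def
  have hP₀c : Continuous P₀ := hv.neg.add ((hv.inner (𝕜 := ℝ) continuous_const).smul continuous_const)
  have hP₁c : Continuous P₁ :=
    ((hv.inner (𝕜 := ℝ) hρc).smul continuous_const).add ((hv.inner (𝕜 := ℝ) continuous_const).smul hρc)
  have hQc : Continuous Q :=
    ((hWc ε).sub (hP₀c.const_smul ε)).sub (hP₁c.const_smul (ε ^ 2))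
  -- ∫ P₀ = 0
  have hIP₀ : ∫ t in (0:ℝ)..L, P₀ t = 0 := by
    have hG : ∀ t, HasDerivAt (fun t => -Γ t + ⟪Γ t, r₀⟫ • r₀) (P₀ t) t := by
      intro t
      have h1 : HasDerivAt Γ (v t) t := (hΓd t).hasDerivAt
      have h3 : HasDerivAt (fun t => (⟪Γ t, r₀⟫ : ℝ)) ⟪v t, r₀⟫ t := by
        simpa using (HasDerivAt.inner ℝ h1 (hasDerivAt_const t r₀))
      exact h1.neg.add (h3.smul_const r₀)
    rw [intervalIntegral.integral_eq_sub_of_hasDerivAt (fun s _ => hG s)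
      (hP₀c.intervalIntegrable 0 L), hΓL, sub_self]
  -- ∫ P₁ = ∫ ⟪Γ, r₀⟫ • v
  have hIP₁ : ∫ t in (0:ℝ)..L, P₁ t = ∫ t in (0:ℝ)..L, ⟪Γ t, r₀⟫ • v t := by
    have hTc : Continuous (fun t => (⟪Γ t, r₀⟫ : ℝ) • v t) :=
      (hΓc.inner (𝕜 := ℝ) continuous_const).smul hv
    have key : ∫ t in (0:ℝ)..L, (P₁ t - ⟪Γ t, r₀⟫ • v t) = 0 := by
      have hF : ∀ t, HasDerivAt (fun t =>
          (⟪Γ t - Γ 0, r₀⟫ ^ 2) • r₀ - ((⟪Γ t - Γ 0, Γ t - Γ 0⟫ : ℝ) / 2) • r₀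
            - ⟪Γ t, r₀⟫ • (Γ t - Γ 0))
          (P₁ t - ⟪Γ t, r₀⟫ • v t) t := by
        intro t
        have h1 : HasDerivAt Γ (v t) t := (hΓd t).hasDerivAt
        have hΔ : HasDerivAt (fun t => Γ t - Γ 0) (v t) t := h1.sub_const _
        have hi1 : HasDerivAt (fun t => (⟪Γ t - Γ 0, r₀⟫ : ℝ)) ⟪v t, r₀⟫ t := by
          simpa using (HasDerivAt.inner ℝ hΔ (hasDerivAt_const t r₀))
        have hi1sq := (hi1.pow 2).smul_const r₀
        have hi2 := ((HasDerivAt.inner ℝ hΔ hΔ).div_const 2).smul_const r₀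
        have hi3 : HasDerivAt (fun t => (⟪Γ t, r₀⟫ : ℝ)) ⟪v t, r₀⟫ t := by
          simpa using (HasDerivAt.inner ℝ h1 (hasDerivAt_const t r₀))
        have hi4 := hi3.smul hΔ
        have h := (hi1sq.sub hi2).sub hi4
        refine h.congr_deriv (Eq.symm ?_)
        simp only [hP₁_def, hρ_def]
        simp only [inner_add_right, inner_neg_right, inner_sub_right, inner_sub_left,
          real_inner_smul_right, real_inner_smul_left, real_inner_comm]
        match_scalars <;> ring
      rw [intervalIntegral.integral_eq_sub_of_hasDerivAt (fun s _ => hF s)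
        ((hP₁c.sub hTc).intervalIntegrable 0 L)]
      simp [hΓL]
    rw [intervalIntegral.integral_sub (hP₁c.intervalIntegrable 0 L)
      (hTc.intervalIntegrable 0 L)] at key
    exact sub_eq_zero.mp key
  -- algebraic decomposition of the vector field
  have hQid : ∀ t, ε • (-v t + ⟪v t, r t ε⟫ • r t ε) = ε • P₀ t + ε ^ 2 • P₁ t + Q t := by
    intro t
    simp only [hQ_def]
    abel
  have hsplit : r L ε - r₀ = ε • (∫ t in (0:ℝ)..L, P₀ t) + ε ^ 2 • (∫ t in (0:ℝ)..L, P₁ t)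
      + ∫ t in (0:ℝ)..L, Q t := by
    rw [hFTC ε L, intervalIntegral.integral_congr (g := fun t => ε • P₀ t + ε ^ 2 • P₁ t + Q t)
      (fun t _ => hQid t),
      intervalIntegral.integral_add (f := fun t => ε • P₀ t + ε ^ 2 • P₁ t) (g := Q) (((hP₀c.const_smul ε).intervalIntegrable 0 L).add
        ((hP₁c.const_smul (ε ^ 2)).intervalIntegrable 0 L)) (hQc.intervalIntegrable 0 L),
      intervalIntegral.integral_add (f := fun t => ε • P₀ t) (g := fun t => ε ^ 2 • P₁ t) ((hP₀c.const_smul ε).intervalIntegrable 0 L)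
        ((hP₁c.const_smul (ε ^ 2)).intervalIntegrable 0 L),
      intervalIntegral.integral_smul, intervalIntegral.integral_smul]
  have hkey : r L ε - r₀ - ε ^ 2 • (∫ t in (0:ℝ)..L, ⟪Γ t, r₀⟫ • v t)
      = ∫ t in (0:ℝ)..L, Q t := by
    rw [hsplit, hIP₀, hIP₁, smul_zero]
    abel
  rw [hkey]
  -- pointwise bound on Q
  have hQb : ∀ x ∈ Set.uIoc (0:ℝ) L, ‖Q x‖ ≤ C₅ * |ε| ^ 3 := by
    intro x hx
    rw [Set.uIoc_of_le hL.le] at hx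
    have hxL : x ∈ Set.Icc (0:ℝ) L := ⟨hx.1.le, hx.2⟩
    have hvx := hM x hxL
    have hEx := hEbound x hxL
    have hδx := claim2 ε hε x hxL
    have hrx := hrB ε hε x hxL
    have hQx : Q x = ε • (⟪v x, E x⟫ • r x ε + ⟪v x, (r x ε - r₀) - E x⟫ • (r x ε - r₀)
        + ⟪v x, r₀⟫ • E x) := by
      simp only [hQ_def, hP₀_def, hP₁_def, hE_def]
      simp only [inner_sub_right, inner_add_right, inner_neg_right, real_inner_smul_right]
      match_scalars <;> ring
    rw [hQx, norm_smul, Real.norm_eq_abs]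
    have h1 : ‖⟪v x, E x⟫ • r x ε‖ ≤ (M * (C₂ * ε ^ 2)) * B := by
      rw [norm_smul, Real.norm_eq_abs]
      exact mul_le_mul ((abs_real_inner_le_norm _ _).trans
        (mul_le_mul hvx hEx (norm_nonneg _) hM0.le)) hrx (norm_nonneg _) (by positivity)
    have h2 : ‖⟪v x, (r x ε - r₀) - E x⟫ • (r x ε - r₀)‖
        ≤ (M * (|ε| * K * L + C₂ * ε ^ 2)) * (|ε| * K * L) := by
      rw [norm_smul, Real.norm_eq_abs]
      have hsub : ‖(r x ε - r₀) - E x‖ ≤ |ε| * K * L + C₂ * ε ^ 2 :=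
        (norm_sub_le _ _).trans (add_le_add hδx hEx)
      exact mul_le_mul ((abs_real_inner_le_norm _ _).trans
        (mul_le_mul hvx hsub (norm_nonneg _) hM0.le)) hδx (norm_nonneg _) (by positivity)
    have h3 : ‖⟪v x, r₀⟫ • E x‖ ≤ (M * R) * (C₂ * ε ^ 2) := by
      rw [norm_smul, Real.norm_eq_abs]
      have hvr : ‖v x‖ * ‖r₀‖ ≤ M * R := by
        rw [hRr]; exact mul_le_mul_of_nonneg_right hvx hR
      exact mul_le_mul ((abs_real_inner_le_norm _ _).trans hvr) hEx
        (norm_nonneg _) (by positivity)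
    have hsum := (norm_add₃_le).trans (add_le_add (add_le_add h1 h2) h3)
    refine (mul_le_mul_of_nonneg_left hsum (abs_nonneg ε)).trans ?_
    rw [hC₅_def, ← sq_abs ε]
    nlinarith [mul_nonneg (mul_nonneg (mul_nonneg (mul_nonneg hM0.le hK.le) hL.le) hC₂.le)
      (mul_nonneg (pow_nonneg (abs_nonneg ε) 3) (sub_nonneg.mpr hε)),
      abs_nonneg ε, hM0.le, hK.le, hL.le, hC₂.le, hR, hB.le]
  refine (intervalIntegral.norm_integral_le_of_norm_le_const hQb).trans ?_
  rw [sub_zero, abs_of_nonneg hL.le]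
  exact le_of_eq (by ring)
end

section
/- Butterfly lemma: for a Darboux butterfly ABCD in ℝⁿ (i.e., D is the reflection of A − B + C about the line AC), the composition of glide reflections G_{DA} ∘ G_{CD} ∘ G_{BC} ∘ G_{AB} is the identity, where G_{UV} is reflection about the line UV followed by translation by V − U. -/
open RealInnerProductSpace

/-- Reflection of the point `P` about the line through `U` and `V` in Euclidean space. -/
noncomputable def lineReflect {n : ℕ} (U V P : EuclideanSpace ℝ (Fin n)) :
    EuclideanSpace ℝ (Fin n) :=
  U + ((2 * ⟪P - U, V - U⟫ / ⟪V - U, V - U⟫) • (V - U) - (P - U))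

/-- The glide reflection G_{UV}: reflection about the line through `U`, `V`
followed by translation by `V − U`. -/
noncomputable def glideReflect {n : ℕ} (U V P : EuclideanSpace ℝ (Fin n)) :
    EuclideanSpace ℝ (Fin n) :=
  lineReflect U V P + (V - U)

section Aux

variable {E : Type*} [NormedAddCommGroup E] [InnerProductSpace ℝ E]

/-- Vector form of reflection in the line spanned by `v`. -/
noncomputable def rrAux (v x : E) : E := (2 * ⟪x, v⟫ / ⟪v, v⟫) • v - x

lemma rrAux_invol {v : E} (hv : v ≠ 0) (x : E) : rrAux v (rrAux v x) = x := by
  have h : ⟪v, v⟫ ≠ 0 := inner_self_ne_zero.mpr hv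
  simp only [rrAux, inner_sub_left, real_inner_smul_left]
  match_scalars <;> field_simp <;> ring

lemma rrAux_neg (v x : E) : rrAux (-v) x = rrAux v x := by
  simp only [rrAux, inner_neg_left, inner_neg_right, neg_neg, smul_neg]
  match_scalars <;> ring

lemma rrAux_sub (v x y : E) : rrAux v (x - y) = rrAux v x - rrAux v y := by
  simp only [rrAux, inner_sub_left, sub_smul]
  match_scalars <;> ring

lemma rrAux_smul (v : E) (c : ℝ) (x : E) : rrAux v (c • x) = c • rrAux v x := by
  simp only [rrAux, real_inner_smul_left, smul_sub, smul_smul]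
  match_scalars <;> ring

lemma rrAux_self {v : E} (hv : v ≠ 0) : rrAux v v = v := by
  have h : ⟪v, v⟫ ≠ 0 := inner_self_ne_zero.mpr hv
  simp only [rrAux]
  match_scalars
  field_simp
  ring

lemma rrAux_inner {u : E} (hu : u ≠ 0) (x y : E) : ⟪rrAux u x, rrAux u y⟫ = ⟪x, y⟫ := by
  have h : ⟪u, u⟫ ≠ 0 := inner_self_ne_zero.mpr hu
  simp only [rrAux, inner_sub_left, inner_sub_right, real_inner_smul_left,
    real_inner_smul_right]
  rw [real_inner_comm y u]
  field_simp
  ring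

lemma rrAux_inner_symm {u : E} (hu : u ≠ 0) (x y : E) :
    ⟪x, rrAux u y⟫ = ⟪rrAux u x, y⟫ := by
  simp only [rrAux, inner_sub_left, inner_sub_right, real_inner_smul_left,
    real_inner_smul_right]
  rw [real_inner_comm y u]
  ring

lemma rrAux_conj {u v : E} (hu : u ≠ 0) (hv : v ≠ 0) (x : E) :
    rrAux (rrAux u v) x = rrAux u (rrAux v (rrAux u x)) := by
  have h1 : ⟪rrAux u v, rrAux u v⟫ = ⟪v, v⟫ := rrAux_inner hu v v
  have h2 : ⟪x, rrAux u v⟫ = ⟪rrAux u x, v⟫ := rrAux_inner_symm hu x v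
  conv_lhs => rw [rrAux, h1, h2]
  conv_rhs => rw [show rrAux v (rrAux u x)
      = (2 * ⟪rrAux u x, v⟫ / ⟪v, v⟫) • v - rrAux u x from rfl,
    rrAux_sub, rrAux_smul, rrAux_invol hu]

set_option maxHeartbeats 1000000 in
lemma rrAux_swap {w1 w2 : E} (h1 : w1 ≠ 0) (h2 : w2 ≠ 0) (h12 : w1 + w2 ≠ 0) (x : E) :
    rrAux (w1 + w2) (rrAux w2 (rrAux w1 x)) = rrAux w1 (rrAux w2 (rrAux (w1 + w2) x)) := by
  have ha : ⟪w1, w1⟫ ≠ 0 := inner_self_ne_zero.mpr h1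
  have hb : ⟪w2, w2⟫ ≠ 0 := inner_self_ne_zero.mpr h2
  have hd : ⟪w1 + w2, w1 + w2⟫ ≠ 0 := inner_self_ne_zero.mpr h12
  have key : ∀ (v : E), ⟪v, v⟫ ≠ 0 → ∀ (y : E),
      rrAux v y = ⟪v, v⟫⁻¹ • ((2 * ⟪y, v⟫) • v - ⟪v, v⟫ • y) := by
    intro v hv y
    rw [rrAux]
    match_scalars <;> field_simp
  conv_lhs => rw [key w1 ha x, rrAux_smul, key w2 hb, smul_smul, rrAux_smul,
    key (w1 + w2) hd, smul_smul]
  conv_rhs => rw [key (w1 + w2) hd x, rrAux_smul, key w2 hb, smul_smul, rrAux_smul,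
    key w1 ha, smul_smul]
  rw [show ⟪w1, w1⟫⁻¹ * ⟪w2, w2⟫⁻¹ * ⟪w1 + w2, w1 + w2⟫⁻¹
      = ⟪w1 + w2, w1 + w2⟫⁻¹ * ⟪w2, w2⟫⁻¹ * ⟪w1, w1⟫⁻¹ from by ring]
  congr 1
  simp only [inner_sub_left, inner_add_left, inner_add_right, real_inner_smul_left,
    real_inner_comm w2 w1, smul_sub, smul_add, smul_smul]
  module

/-- The six-fold composition is the identity. -/
lemma rrAux_key {w1 w2 : E} (h1 : w1 ≠ 0) (h2 : w2 ≠ 0) (h12 : w1 + w2 ≠ 0) (x : E) :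
    rrAux (w1 + w2) (rrAux w2 (rrAux w1
      (rrAux (w1 + w2) (rrAux w2 (rrAux w1 x))))) = x := by
  have h : rrAux (w1 + w2) (rrAux w2 (rrAux w1 x))
      = rrAux w1 (rrAux w2 (rrAux (w1 + w2) x)) := rrAux_swap h1 h2 h12 x
  rw [h, rrAux_invol h1, rrAux_invol h2, rrAux_invol h12]

end Aux

lemma glideReflect_eq {n : ℕ} (U V P : EuclideanSpace ℝ (Fin n)) :
    glideReflect U V P = V + rrAux (V - U) (P - U) := by
  simp only [glideReflect, lineReflect, rrAux]
  abel

lemma glideReflect_step {n : ℕ} (U V z : EuclideanSpace ℝ (Fin n)) :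
    glideReflect U V (U + z) = V + rrAux (V - U) z := by
  rw [glideReflect_eq, add_sub_cancel_left]

/-- Butterfly Lemma: for a Darboux butterfly ABCD (D is the reflection of A − B + C
about the line AC), the composition G_{DA} ∘ G_{CD} ∘ G_{BC} ∘ G_{AB} of glide
reflections is the identity. -/
theorem butterfly_lemma
    {n : ℕ} (A B C D : EuclideanSpace ℝ (Fin n))
    (hAB : A ≠ B) (hAC : A ≠ C) (hAD : A ≠ D) (hBC : B ≠ C) (hBD : B ≠ D) (hCD : C ≠ D)
    (hbutterfly : D = lineReflect A C (A - B + C)) :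
    ∀ P, glideReflect D A (glideReflect C D (glideReflect B C (glideReflect A B P))) = P := by
  intro P
  have hw1 : B - A ≠ 0 := sub_ne_zero.mpr hAB.symm
  have hw2 : C - B ≠ 0 := sub_ne_zero.mpr hBC.symm
  have hu : C - A ≠ 0 := sub_ne_zero.mpr hAC.symm
  have hnw1 : -(B - A) ≠ 0 := neg_ne_zero.mpr hw1
  have hD : D = A + rrAux (C - A) (C - B) := by
    rw [hbutterfly, lineReflect, show A - B + C - A = C - B from by abel]
    rfl
  have hDC : D - C = rrAux (C - A) (-(B - A)) := by
    rw [show (-(B - A) : EuclideanSpace ℝ (Fin n)) = (C - B) - (C - A) from by abel,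
      rrAux_sub, rrAux_self hu, hD]
    abel
  have hADv : A - D = -(rrAux (C - A) (C - B)) := by
    rw [hD]; abel
  rw [glideReflect_eq A B P, glideReflect_step B C, glideReflect_step C D,
    glideReflect_step D A, hDC, hADv, rrAux_neg, rrAux_conj hu hw2,
    rrAux_conj hu hnw1, rrAux_neg, rrAux_invol hu,
    show C - A = (B - A) + (C - B) from by abel,
    rrAux_key hw1 hw2 (by rw [show (B - A) + (C - B) = C - A from by abel]; exact hu)]
  abel
end

section
/- Wegner's linear curves are elasticae: if y = f(x) satisfies 1/√(1+f'(x)²) = a f(x)² + b and the curve is parameterized by arclength with curvature κ, then κ = −2a·y along the curve and κ satisfies the Euler–Lagrange equation κ̈ + (1/2)κ³ + 2ab·κ = 0 (derivatives with respect to arclength). -/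
open Real

/-- Wegner's linear curves are buckled rings / elasticae: if an arclength-parameterized
curve (x,y) with direction angle θ and curvature κ = θ̇ satisfies ẋ = a·y² + b
(Wegner's equation 1/√(1+f'²) = a f² + b), and sin θ never vanishes, then κ = −2a·y and
κ satisfies the Euler–Lagrange equation κ̈ + (1/2)κ³ + 2ab·κ = 0. -/
theorem wegner_linear_curves_are_elasticae
    (a b : ℝ) (x y θ κ : ℝ → ℝ)
    (hx : Differentiable ℝ x) (hy : Differentiable ℝ y) (hθ : Differentiable ℝ θ)
    (hdx : ∀ t, deriv x t = cos (θ t))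
    (hdy : ∀ t, deriv y t = sin (θ t))
    (hκ : ∀ t, κ t = deriv θ t)
    (hwegner : ∀ t, deriv x t = a * (y t) ^ 2 + b)
    (hsin : ∀ t, sin (θ t) ≠ 0) :
    (∀ t, κ t = -2 * a * y t) ∧
    (∀ t, deriv (deriv κ) t + (1 / 2) * (κ t) ^ 3 + 2 * a * b * κ t = 0) := by
  have h1 : ∀ t, Real.cos (θ t) = a * (y t) ^ 2 + b := fun t =>
    (hdx t).symm.trans (hwegner t)
  have hfun : (fun t => Real.cos (θ t)) = fun t => a * (y t) ^ 2 + b := funext h1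
  -- derivative identity
  have key : ∀ t, -Real.sin (θ t) * deriv θ t = a * (2 * y t ^ 1 * deriv y t) := by
    intro t
    have hc : HasDerivAt (fun t => Real.cos (θ t)) (-Real.sin (θ t) * deriv θ t) t :=
      (Real.hasDerivAt_cos (θ t)).comp t (hθ t).hasDerivAt
    have hr : HasDerivAt (fun t => a * (y t) ^ 2 + b)
        (a * (2 * y t ^ 1 * deriv y t)) t := by
      have := (((hy t).hasDerivAt.pow 2).const_mul a).add_const b
      simpa using this
    rw [hfun] at hc
    exact hc.unique hr
  have part1 : ∀ t, κ t = -2 * a * y t := by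
    intro t
    have h := key t
    rw [hdy t, ← hκ t] at h
    have h' : Real.sin (θ t) * κ t = Real.sin (θ t) * (-2 * a * y t) := by ring_nf; linarith [h]
    exact mul_left_cancel₀ (hsin t) h'
  refine ⟨part1, ?_⟩
  have hκfun : κ = fun t => -2 * a * y t := funext part1
  have hdκ : deriv κ = fun t => -2 * a * Real.sin (θ t) := by
    funext t
    rw [hκfun]
    have : HasDerivAt (fun t => -2 * a * y t) (-2 * a * deriv y t) t :=
      ((hy t).hasDerivAt).const_mul (-2 * a)
    rw [this.deriv, hdy t]
  intro t
  have hdd : deriv (deriv κ) t = -2 * a * (Real.cos (θ t) * deriv θ t) := by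
    rw [hdκ]
    have : HasDerivAt (fun t => -2 * a * Real.sin (θ t))
        (-2 * a * (Real.cos (θ t) * deriv θ t)) t :=
      (((Real.hasDerivAt_sin (θ t)).comp t (hθ t).hasDerivAt)).const_mul (-2 * a)
    exact this.deriv
  rw [hdd, ← hκ t, h1 t, part1 t]
  ring
end
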